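/- Among all rank-N orthonormal families ψ_1,…,ψ_N in H, the POD basis φ_1,…,φ_N minimizes the total projection error E_N(ψ) = Σ_{i=1}^{N_s} ‖T_i - Σ_{k=1}^{N} ⟨T_i, ψ_k⟩ ψ_k‖^2, and the minimum value is Σ_{k=N+1}^{N_s} λ_k. -/

import Mathlib

/-!
Put `v_k = ∑_j q_kj T_j`. The eigen-equations make the `v_k` orthogonal with `‖v_k‖² = λ_k`,
so `v_k = √λ_k φ_k` and the `φ_k` are orthonormal or zero. Since the matrix `(q_kj)` is
orthogonal, `∑_i ⟪T_i, x⟫² = ∑_k ⟪v_k, x⟫² = ∑_k λ_k ⟪φ_k, x⟫²` for every `x`. By Pythagoras the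
error of an orthonormal family `ψ_1, …, ψ_N` is therefore `∑_k λ_k - ∑_k λ_k b_k` with
`b_k = ∑_m ⟪φ_k, ψ_m⟫²`, and Bessel's inequality, applied to both families, gives `0 ≤ b_k ≤ 1`
and `∑_k b_k ≤ N`. For decreasing `λ` these constraints force `∑_k λ_k b_k ≤ λ_1 + ⋯ + λ_N`
(compare `λ_k` with the threshold `λ_{N+1}`), which is the value attained by `ψ = φ`.
-/

open scoped RealInnerProductSpace
open Finset Matrix

section OrthonormalOrZero

variable {E : Type*} [NormedAddCommGroup E] [InnerProductSpace ℝ E] {κ : Type*} {e : κ → E}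

theorem norm_sq_sub_sum_inner_smul (horth : Pairwise fun a b => ⟪e a, e b⟫ = 0)
    (hunit : ∀ a, ‖e a‖ = 1 ∨ e a = 0) (s : Finset κ) (x : E) :
    ‖x - ∑ a ∈ s, ⟪x, e a⟫ • e a‖ ^ 2 = ‖x‖ ^ 2 - ∑ a ∈ s, ⟪x, e a⟫ ^ 2 := by
  have hcoef : ∀ a ∈ s, ⟪e a, ∑ b ∈ s, ⟪x, e b⟫ • e b⟫ = ⟪x, e a⟫ := by
    intro a ha
    rw [inner_sum, Finset.sum_eq_single_of_mem a ha fun b _ hba => by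
      rw [real_inner_smul_right, horth hba.symm, mul_zero]]
    rcases hunit a with h | h
    · rw [real_inner_smul_right, real_inner_self_eq_norm_sq, h, one_pow, mul_one]
    · simp [h]
  have hnorm : ‖∑ a ∈ s, ⟪x, e a⟫ • e a‖ ^ 2 = ∑ a ∈ s, ⟪x, e a⟫ ^ 2 := by
    rw [← real_inner_self_eq_norm_sq, sum_inner]
    exact Finset.sum_congr rfl fun a ha => by rw [real_inner_smul_left, hcoef a ha, sq]
  have hcross : ⟪x, ∑ a ∈ s, ⟪x, e a⟫ • e a⟫ = ∑ a ∈ s, ⟪x, e a⟫ ^ 2 := by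
    simp only [inner_sum, real_inner_smul_right, sq]
  rw [norm_sub_sq_real, hnorm, hcross]
  ring

theorem sum_inner_sq_le_norm_sq (horth : Pairwise fun a b => ⟪e a, e b⟫ = 0)
    (hunit : ∀ a, ‖e a‖ = 1 ∨ e a = 0) (s : Finset κ) (x : E) :
    ∑ a ∈ s, ⟪x, e a⟫ ^ 2 ≤ ‖x‖ ^ 2 := by
  have := norm_sq_sub_sum_inner_smul horth hunit s x
  nlinarith [sq_nonneg ‖x - ∑ a ∈ s, ⟪x, e a⟫ • e a‖]

theorem sum_norm_sq_sub_sum_inner_smul (horth : Pairwise fun a b => ⟪e a, e b⟫ = 0)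
    (hunit : ∀ a, ‖e a‖ = 1 ∨ e a = 0) (s : Finset κ) {ι : Type*} [Fintype ι] (T : ι → E) :
    ∑ i, ‖T i - ∑ a ∈ s, ⟪T i, e a⟫ • e a‖ ^ 2
      = ∑ i, ‖T i‖ ^ 2 - ∑ a ∈ s, ∑ i, ⟪T i, e a⟫ ^ 2 := by
  simp only [norm_sq_sub_sum_inner_smul horth hunit, Finset.sum_sub_distrib]
  rw [Finset.sum_comm]

end OrthonormalOrZero

theorem sum_norm_sq_sum_smul_of_mem_orthogonalGroup {E : Type*} [NormedAddCommGroup E]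
    [InnerProductSpace ℝ E] {n : Type*} [Fintype n] [DecidableEq n] {Q : Matrix n n ℝ}
    (hQ : Q ∈ Matrix.orthogonalGroup n ℝ) (u : n → E) :
    ∑ k, ‖∑ j, Q k j • u j‖ ^ 2 = ∑ j, ‖u j‖ ^ 2 := by
  have hQ' := congrFun₂ ((Matrix.mem_orthogonalGroup_iff' _ _).mp hQ)
  simp only [Matrix.mul_apply, Matrix.transpose_apply, Matrix.one_apply] at hQ'
  calc ∑ k, ‖∑ j, Q k j • u j‖ ^ 2
      = ∑ i, ∑ j, (∑ k, Q k i * Q k j) * ⟪u i, u j⟫ := by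
        simp only [← real_inner_self_eq_norm_sq, sum_inner, inner_sum, real_inner_smul_left,
          real_inner_smul_right, Finset.sum_mul]
        rw [Finset.sum_comm]
        refine Finset.sum_congr rfl fun i _ => ?_
        rw [Finset.sum_comm]
        exact Finset.sum_congr rfl fun j _ => Finset.sum_congr rfl fun k _ => by
          rw [real_inner_comm]; ring
    _ = ∑ j, ‖u j‖ ^ 2 := by
        simp [hQ']

theorem mem_orthogonalGroup_of_dotProduct_eq_ite {n : Type*} [Fintype n] [DecidableEq n]
    {q : n → n → ℝ} (horth : ∀ k l, q k ⬝ᵥ q l = if k = l then 1 else 0) :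
    Matrix.of q ∈ Matrix.orthogonalGroup n ℝ := by
  rw [Matrix.mem_orthogonalGroup_iff]
  ext k l
  simpa [Matrix.mul_apply, Matrix.one_apply, dotProduct] using horth k l

theorem sum_mul_le_sum_filter_lt_of_antitone {n N : ℕ} {lam b : Fin n → ℝ}
    (hanti : Antitone lam) (hlam : ∀ k, 0 ≤ lam k) (hb0 : ∀ k, 0 ≤ b k) (hb1 : ∀ k, b k ≤ 1)
    (hbN : ∑ k, b k ≤ N) :
    ∑ k, lam k * b k ≤ ∑ k ∈ univ.filter (fun k : Fin n => (k : ℕ) < N), lam k := by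
  obtain hN | hN := lt_or_ge N n
  · set t := lam ⟨N, hN⟩
    have hcard : #(univ.filter fun k : Fin n => (k : ℕ) < N) = N := by
      rw [Fin.card_filter_val_lt, min_eq_right hN.le]
    have hterm : ∀ k, (lam k - t) * b k ≤ if (k : ℕ) < N then lam k - t else 0 := by
      intro k
      split_ifs with hk
      · have : t ≤ lam k := hanti (Fin.le_def.mpr hk.le)
        nlinarith [hb1 k]
      · have : lam k ≤ t := hanti (Fin.le_def.mpr (not_lt.mp hk))
        nlinarith [hb0 k]
    calc ∑ k, lam k * b k = ∑ k, (lam k - t) * b k + t * ∑ k, b k := by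
          rw [Finset.mul_sum, ← Finset.sum_add_distrib]; congr 1; ext; ring
      _ ≤ ∑ k : Fin n, (if (k : ℕ) < N then lam k - t else 0) + t * N := by
          gcongr with k
          · exact hterm k
          · exact hlam _
      _ = _ := by
          rw [← Finset.sum_filter, Finset.sum_sub_distrib, Finset.sum_const, hcard, nsmul_eq_mul]
          ring
  · calc ∑ k, lam k * b k ≤ ∑ k, lam k :=
          Finset.sum_le_sum fun k _ => mul_le_of_le_one_right (hlam k) (hb1 k)
      _ = _ := by
          rw [Finset.filter_true_of_mem fun k _ => k.isLt.trans_le hN]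

section POD

variable {H : Type*} [NormedAddCommGroup H] [InnerProductSpace ℝ H] {ι : Type*} [Fintype ι]

structure IsGramEigenbasis [DecidableEq ι] (T : ι → H) (lam : ι → ℝ) (q : ι → ι → ℝ) :
    Prop where
  mulVec_eq : ∀ k, gram ℝ T *ᵥ q k = lam k • q k
  dotProduct_eq : ∀ k l, q k ⬝ᵥ q l = if k = l then 1 else 0

noncomputable def podMode (T : ι → H) (lam : ι → ℝ) (q : ι → ι → ℝ) (k : ι) : H :=
  if 0 < lam k then (√(lam k))⁻¹ • ∑ j, q k j • T j else 0

variable {T : ι → H} {lam : ι → ℝ} {q : ι → ι → ℝ}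

theorem podMode_eq_smul (k : ι) :
    podMode T lam q k = (if 0 < lam k then (√(lam k))⁻¹ else 0) • ∑ j, q k j • T j := by
  rw [podMode]
  split_ifs <;> simp

namespace IsGramEigenbasis

variable [DecidableEq ι]

theorem inner_sum_smul (h : IsGramEigenbasis T lam q) (k l : ι) :
    ⟪∑ j, q k j • T j, ∑ j, q l j • T j⟫ = if k = l then lam k else 0 := by
  rw [← star_dotProduct_gram_mulVec, star_trivial, h.mulVec_eq, dotProduct_smul,
    h.dotProduct_eq, smul_eq_mul]
  split_ifs with hkl
  · rw [hkl, mul_one]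
  · rw [mul_zero]

theorem eigenvalue_eq_norm_sq (h : IsGramEigenbasis T lam q) (k : ι) :
    lam k = ‖∑ j, q k j • T j‖ ^ 2 := by
  rw [← real_inner_self_eq_norm_sq, h.inner_sum_smul, if_pos rfl]

theorem eigenvalue_nonneg (h : IsGramEigenbasis T lam q) (k : ι) : 0 ≤ lam k := by
  rw [h.eigenvalue_eq_norm_sq k]
  positivity

theorem sum_smul_eq_sqrt_smul_podMode (h : IsGramEigenbasis T lam q) (k : ι) :
    ∑ j, q k j • T j = √(lam k) • podMode T lam q k := by
  rw [podMode_eq_smul]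
  split_ifs with hk
  · rw [smul_smul, mul_inv_cancel₀ (Real.sqrt_pos.mpr hk).ne', one_smul]
  · have hzero : lam k = 0 := (not_lt.mp hk).antisymm (h.eigenvalue_nonneg k)
    rw [zero_smul, smul_zero, ← norm_eq_zero, ← sq_eq_zero_iff, ← h.eigenvalue_eq_norm_sq, hzero]

theorem pairwise_inner_podMode_eq_zero (h : IsGramEigenbasis T lam q) :
    Pairwise fun k l => ⟪podMode T lam q k, podMode T lam q l⟫ = 0 := fun k l hkl => by
  simp only [podMode_eq_smul, real_inner_smul_left, real_inner_smul_right, h.inner_sum_smul,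
    if_neg hkl, mul_zero]

theorem eigenvalue_mul_norm_sq_podMode (h : IsGramEigenbasis T lam q) (k : ι) :
    lam k * ‖podMode T lam q k‖ ^ 2 = lam k := by
  conv_rhs => rw [h.eigenvalue_eq_norm_sq k, h.sum_smul_eq_sqrt_smul_podMode k]
  rw [norm_smul, mul_pow, Real.norm_eq_abs, sq_abs, Real.sq_sqrt (h.eigenvalue_nonneg k)]

theorem norm_podMode_eq_one_or_eq_zero (h : IsGramEigenbasis T lam q) (k : ι) :
    ‖podMode T lam q k‖ = 1 ∨ podMode T lam q k = 0 := by
  by_cases hk : 0 < lam k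
  · have hsq := (mul_eq_left₀ hk.ne').mp (h.eigenvalue_mul_norm_sq_podMode k)
    exact Or.inl ((pow_eq_one_iff_of_nonneg (norm_nonneg _) two_ne_zero).mp hsq)
  · exact Or.inr (by rw [podMode, if_neg hk])

theorem sum_inner_sq_eq_sum_eigenvalue_mul (h : IsGramEigenbasis T lam q) (x : H) :
    ∑ i, ⟪T i, x⟫ ^ 2 = ∑ k, lam k * ⟪podMode T lam q k, x⟫ ^ 2 := by
  have hQ := sum_norm_sq_sum_smul_of_mem_orthogonalGroup
    (mem_orthogonalGroup_of_dotProduct_eq_ite h.dotProduct_eq) fun j => ⟪T j, x⟫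
  simp only [Real.norm_eq_abs, sq_abs, Matrix.of_apply, smul_eq_mul] at hQ
  rw [← hQ]
  refine Finset.sum_congr rfl fun k _ => ?_
  simp only [← real_inner_smul_left, ← sum_inner]
  rw [h.sum_smul_eq_sqrt_smul_podMode k, real_inner_smul_left, mul_pow,
    Real.sq_sqrt (h.eigenvalue_nonneg k)]

theorem sum_norm_sq_eq_sum_eigenvalues (h : IsGramEigenbasis T lam q) :
    ∑ i, ‖T i‖ ^ 2 = ∑ k, lam k := by
  rw [← sum_norm_sq_sum_smul_of_mem_orthogonalGroup
    (mem_orthogonalGroup_of_dotProduct_eq_ite h.dotProduct_eq) T]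
  exact Finset.sum_congr rfl fun k _ => (h.eigenvalue_eq_norm_sq k).symm

theorem sum_inner_podMode_sq (h : IsGramEigenbasis T lam q) (a : ι) :
    ∑ i, ⟪T i, podMode T lam q a⟫ ^ 2 = lam a := by
  have hmul := h.eigenvalue_mul_norm_sq_podMode a
  rw [h.sum_inner_sq_eq_sum_eigenvalue_mul, Finset.sum_eq_single a
    (fun k _ hka => by rw [h.pairwise_inner_podMode_eq_zero hka]; ring) (by simp),
    real_inner_self_eq_norm_sq, sq (‖_‖ ^ 2), ← mul_assoc, hmul, hmul]

theorem sum_norm_sq_sub_proj_podMode (h : IsGramEigenbasis T lam q) (s : Finset ι) :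
    ∑ i, ‖T i - ∑ k ∈ s, ⟪T i, podMode T lam q k⟫ • podMode T lam q k‖ ^ 2
      = ∑ k, lam k - ∑ k ∈ s, lam k := by
  rw [sum_norm_sq_sub_sum_inner_smul h.pairwise_inner_podMode_eq_zero
      h.norm_podMode_eq_one_or_eq_zero, h.sum_norm_sq_eq_sum_eigenvalues,
    Finset.sum_congr rfl fun a _ => h.sum_inner_podMode_sq a]

theorem sum_norm_sq_sub_proj_orthonormal (h : IsGramEigenbasis T lam q)
    {κ : Type*} {ψ : κ → H} (hψ : Orthonormal ℝ ψ) (s : Finset κ) :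
    ∑ i, ‖T i - ∑ m ∈ s, ⟪T i, ψ m⟫ • ψ m‖ ^ 2
      = ∑ k, lam k - ∑ k, lam k * ∑ m ∈ s, ⟪podMode T lam q k, ψ m⟫ ^ 2 := by
  rw [sum_norm_sq_sub_sum_inner_smul hψ.2 (fun m => Or.inl (hψ.1 m)),
    h.sum_norm_sq_eq_sum_eigenvalues,
    Finset.sum_congr rfl fun m _ => h.sum_inner_sq_eq_sum_eigenvalue_mul (ψ m), Finset.sum_comm]
  simp only [Finset.mul_sum]

theorem sum_inner_podMode_sq_le_one (h : IsGramEigenbasis T lam q)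
    {κ : Type*} {ψ : κ → H} (hψ : Orthonormal ℝ ψ) (s : Finset κ) (k : ι) :
    ∑ m ∈ s, ⟪podMode T lam q k, ψ m⟫ ^ 2 ≤ 1 :=
  (sum_inner_sq_le_norm_sq hψ.2 (fun m => Or.inl (hψ.1 m)) s _).trans <| by
    rcases h.norm_podMode_eq_one_or_eq_zero k with hk | hk <;> simp [hk]

theorem sum_sum_inner_podMode_sq_le_card (h : IsGramEigenbasis T lam q)
    {κ : Type*} {ψ : κ → H} (hψ : Orthonormal ℝ ψ) (s : Finset κ) :
    ∑ k, ∑ m ∈ s, ⟪podMode T lam q k, ψ m⟫ ^ 2 ≤ #s := by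
  rw [Finset.sum_comm]
  calc ∑ m ∈ s, ∑ k, ⟪podMode T lam q k, ψ m⟫ ^ 2
      = ∑ m ∈ s, ∑ k, ⟪ψ m, podMode T lam q k⟫ ^ 2 := by simp only [real_inner_comm]
    _ ≤ ∑ m ∈ s, ‖ψ m‖ ^ 2 := Finset.sum_le_sum fun m _ =>
        sum_inner_sq_le_norm_sq h.pairwise_inner_podMode_eq_zero
          h.norm_podMode_eq_one_or_eq_zero univ (ψ m)
    _ = #s := by simp [hψ.1]

end IsGramEigenbasis

end POD

theorem pod_optimality_general {H : Type*}
    [NormedAddCommGroup H] [InnerProductSpace ℝ H]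
    (Ns : ℕ) (T : Fin Ns → H)
    (C : Matrix (Fin Ns) (Fin Ns) ℝ)
    (hC : ∀ i j, C i j = ⟪T i, T j⟫)
    (lam : Fin Ns → ℝ) (q : Fin Ns → (Fin Ns → ℝ))
    (hord : ∀ k l : Fin Ns, k ≤ l → lam l ≤ lam k)
    (heig : ∀ k, C.mulVec (q k) = lam k • q k)
    (horth : ∀ k l, (∑ j, q k j * q l j) = if k = l then 1 else 0)
    (φ : Fin Ns → H)
    (hφ : ∀ k, φ k = if 0 < lam k
        then (Real.sqrt (lam k))⁻¹ • ∑ j, q k j • T j else 0)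
    (N : ℕ) :
    (∑ i, ‖T i - ∑ k ∈ Finset.univ.filter (fun k : Fin Ns => (k : ℕ) < N),
          ⟪T i, φ k⟫ • φ k‖ ^ 2
        = ∑ k ∈ Finset.univ.filter (fun k : Fin Ns => N ≤ (k : ℕ)), lam k) ∧
    (∀ ψ : Fin N → H, Orthonormal ℝ ψ →
      ∑ i, ‖T i - ∑ k ∈ Finset.univ.filter (fun k : Fin Ns => (k : ℕ) < N),
            ⟪T i, φ k⟫ • φ k‖ ^ 2
        ≤ ∑ i, ‖T i - ∑ k : Fin N, ⟪T i, ψ k⟫ • ψ k‖ ^ 2) := by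
  obtain rfl : C = gram ℝ T := Matrix.ext hC
  obtain rfl : φ = podMode T lam q := funext hφ
  have h : IsGramEigenbasis T lam q := ⟨heig, horth⟩
  have hsplit := sum_filter_not_add_sum_filter univ (fun k : Fin Ns => (k : ℕ) < N) lam
  simp only [not_lt] at hsplit
  rw [h.sum_norm_sq_sub_proj_podMode]
  refine ⟨by linarith, fun ψ hψ => ?_⟩
  have hbound := sum_mul_le_sum_filter_lt_of_antitone (fun k l hkl => hord k l hkl)
    h.eigenvalue_nonneg (fun k => by positivity) (h.sum_inner_podMode_sq_le_one hψ univ)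
    (by simpa using h.sum_sum_inner_podMode_sq_le_card hψ univ)
  rw [h.sum_norm_sq_sub_proj_orthonormal hψ univ]
  linarith

/-- POD optimality: among all orthonormal families `ψ_1,…,ψ_N` in `H`, the POD
basis (built from the eigenvectors of the Gram matrix corresponding to the `N`
largest eigenvalues) minimizes the total projection error
`E_N(ψ) = Σ_i ‖T_i - Σ_k ⟨T_i, ψ_k⟩ ψ_k‖²`, and the minimum value equals the
sum of the discarded eigenvalues. -/
theorem pod_optimality {H : Type*}
    [NormedAddCommGroup H] [InnerProductSpace ℝ H]
    (Ns : ℕ) (T : Fin Ns → H)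
    (C : Matrix (Fin Ns) (Fin Ns) ℝ)
    (hC : ∀ i j, C i j = ⟪T i, T j⟫)
    (lam : Fin Ns → ℝ) (q : Fin Ns → (Fin Ns → ℝ))
    (hlam : ∀ k, 0 ≤ lam k)
    (hord : ∀ k l : Fin Ns, k ≤ l → lam l ≤ lam k)
    (heig : ∀ k, C.mulVec (q k) = lam k • q k)
    (horth : ∀ k l, (∑ j, q k j * q l j) = if k = l then 1 else 0)
    (φ : Fin Ns → H)
    (hφ : ∀ k, φ k = if 0 < lam k
        then (Real.sqrt (lam k))⁻¹ • ∑ j, q k j • T j else 0)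
    (N : ℕ) (hN : N ≤ Ns) :
    (∑ i, ‖T i - ∑ k ∈ Finset.univ.filter (fun k : Fin Ns => (k : ℕ) < N),
          ⟪T i, φ k⟫ • φ k‖ ^ 2
        = ∑ k ∈ Finset.univ.filter (fun k : Fin Ns => N ≤ (k : ℕ)), lam k) ∧
    (∀ ψ : Fin N → H, Orthonormal ℝ ψ →
      ∑ i, ‖T i - ∑ k ∈ Finset.univ.filter (fun k : Fin Ns => (k : ℕ) < N),
            ⟪T i, φ k⟫ • φ k‖ ^ 2
        ≤ ∑ i, ‖T i - ∑ k : Fin N, ⟪T i, ψ k⟫ • ψ k‖ ^ 2) :=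
  pod_optimality_general Ns T C hC lam q hord heig horth φ hφ N
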